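/- Let R be a relational doctrine with quotients on a category C. Then every arrow f : X → Y of C factors as f = i ∘ q where q is a quotient arrow (namely an effective descent quotient arrow of the kernel gr(f) ; gr(f)°) and i is an injective arrow. -/

import Mathlib

open CategoryTheory

universe w w' v v' u u'

/-- A relational doctrine on a category `C` with fibres `P X Y` (posets):
a contravariant functor `(C^op × C^op) → Pos` with identities, composition and converse. -/
structure RelDoctrine (C : Type u) [Category.{v} C] (P : C → C → Type w)
    [∀ X Y : C, PartialOrder (P X Y)] where
  reidx : ∀ {A X B Y : C}, (A ⟶ X) → (B ⟶ Y) → P X Y → P A B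
  reidx_mono : ∀ {A X B Y : C} (f : A ⟶ X) (g : B ⟶ Y), Monotone (reidx f g)
  reidx_id : ∀ {X Y : C} (α : P X Y), reidx (𝟙 X) (𝟙 Y) α = α
  reidx_comp :
    ∀ {A X X' B Y Y' : C} (f : A ⟶ X) (f' : X ⟶ X') (g : B ⟶ Y) (g' : Y ⟶ Y') (α : P X' Y'),
      reidx (f ≫ f') (g ≫ g') α = reidx f g (reidx f' g' α)
  d : ∀ X : C, P X X
  comp : ∀ {X Y Z : C}, P X Y → P Y Z → P X Z
  comp_mono : ∀ {X Y Z : C} {α α' : P X Y} {β β' : P Y Z},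
      α ≤ α' → β ≤ β' → comp α β ≤ comp α' β'
  conv : ∀ {X Y : C}, P X Y → P Y X
  conv_mono : ∀ {X Y : C} {α α' : P X Y}, α ≤ α' → conv α ≤ conv α'
  d_le_reidx : ∀ {X Y : C} (f : X ⟶ Y), d X ≤ reidx f f (d Y)
  comp_reidx_le : ∀ {X A Y B Z W : C} (f : X ⟶ A) (g : Y ⟶ B) (h : Z ⟶ W)
      (α : P A B) (β : P B W),
      comp (reidx f g α) (reidx g h β) ≤ reidx f h (comp α β)
  conv_reidx_le : ∀ {X A Y B : C} (f : X ⟶ A) (g : Y ⟶ B) (α : P A B),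
      conv (reidx f g α) ≤ reidx g f (conv α)
  comp_assoc : ∀ {X Y Z W : C} (α : P X Y) (β : P Y Z) (γ : P Z W),
      comp α (comp β γ) = comp (comp α β) γ
  d_comp : ∀ {X Y : C} (α : P X Y), comp (d X) α = α
  comp_d : ∀ {X Y : C} (α : P X Y), comp α (d Y) = α
  conv_comp : ∀ {X Y Z : C} (α : P X Y) (β : P Y Z),
      conv (comp α β) = comp (conv β) (conv α)
  conv_d : ∀ X : C, conv (d X) = d X
  conv_conv : ∀ {X Y : C} (α : P X Y), conv (conv α) = α

namespace RelDoctrine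

variable {C : Type u} [Category.{v} C] {P : C → C → Type w} [∀ X Y : C, PartialOrder (P X Y)]

/-- The graph of an arrow `f : X ⟶ Y` is `R(f, id_Y)(d_Y)`. -/
def gr (D : RelDoctrine C P) {X Y : C} (f : X ⟶ Y) : P X Y :=
  D.reidx f (𝟙 Y) (D.d Y)

/-- `α` is functional: `α° ; α ≤ d_Y`. -/
def Functional (D : RelDoctrine C P) {X Y : C} (α : P X Y) : Prop :=
  D.comp (D.conv α) α ≤ D.d Y

/-- `α` is total: `d_X ≤ α ; α°`. -/
def Total (D : RelDoctrine C P) {X Y : C} (α : P X Y) : Prop :=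
  D.d X ≤ D.comp α (D.conv α)

/-- `α` is injective: `α ; α° ≤ d_X`. -/
def InjectiveRel (D : RelDoctrine C P) {X Y : C} (α : P X Y) : Prop :=
  D.comp α (D.conv α) ≤ D.d X

/-- `α` is surjective: `d_Y ≤ α° ; α`. -/
def SurjectiveRel (D : RelDoctrine C P) {X Y : C} (α : P X Y) : Prop :=
  D.d Y ≤ D.comp (D.conv α) α

/-- The kernel of an arrow `f` is `gr(f) ; gr(f)°`. -/
def kernelOf (D : RelDoctrine C P) {X Y : C} (f : X ⟶ Y) : P X X :=
  D.comp (D.gr f) (D.conv (D.gr f))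

/-- An `R`-equivalence relation: reflexive, symmetric, transitive. -/
def IsEquivRel (D : RelDoctrine C P) {X : C} (ρ : P X X) : Prop :=
  D.d X ≤ ρ ∧ D.conv ρ ≤ ρ ∧ D.comp ρ ρ ≤ ρ

/-- `q : X ⟶ W` is a quotient arrow of the equivalence relation `ρ` on `X`. -/
def IsQuotientArrow (D : RelDoctrine C P) {X W : C} (ρ : P X X) (q : X ⟶ W) : Prop :=
  ρ ≤ D.kernelOf q ∧
    ∀ (Z : C) (f : X ⟶ Z), ρ ≤ D.kernelOf f → ∃! h : W ⟶ Z, f = q ≫ h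

/-- The quotient arrow `q` of `ρ` is effective: `ρ = gr(q) ; gr(q)°`. -/
def Effective (D : RelDoctrine C P) {X W : C} (ρ : P X X) (q : X ⟶ W) : Prop :=
  ρ = D.kernelOf q

/-- The arrow `q` is descent: `d_W ≤ gr(q)° ; gr(q)`. -/
def Descent (D : RelDoctrine C P) {X W : C} (q : X ⟶ W) : Prop :=
  D.d W ≤ D.comp (D.conv (D.gr q)) (D.gr q)

/-- `D` has quotients: every equivalence relation admits an effective descent quotient arrow. -/
def HasQuotients (D : RelDoctrine C P) : Prop :=
  ∀ (X : C) (ρ : P X X), D.IsEquivRel ρ →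
    ∃ (W : C) (q : X ⟶ W), D.IsQuotientArrow ρ q ∧ D.Effective ρ q ∧ D.Descent q

/-- `f ≐ g` : the arrows `f, g` are `R`-equal, i.e. `d_X ≤ R(f,g)(d_Y)`. -/
def RExtEq (D : RelDoctrine C P) {X Y : C} (f g : X ⟶ Y) : Prop :=
  D.d X ≤ D.reidx f g (D.d Y)

/-- `D` is extensional: `R`-equal arrows are equal. -/
def Extensional (D : RelDoctrine C P) : Prop :=
  ∀ (X Y : C) (f g : X ⟶ Y), D.RExtEq f g → f = g

/-- `D` is balanced: every bijective arrow is an isomorphism. -/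
def BalancedDoc (D : RelDoctrine C P) : Prop :=
  ∀ (X Y : C) (f : X ⟶ Y), D.InjectiveRel (D.gr f) → D.SurjectiveRel (D.gr f) → IsIso f

/-- `Q` is `R`-projective with respect to quotient arrows. -/
def ProjectiveObj (D : RelDoctrine C P) (Q : C) : Prop :=
  ∀ (X Y : C) (f : Q ⟶ Y) (q : X ⟶ Y) (ρ : P X X),
    D.IsEquivRel ρ → D.IsQuotientArrow ρ q → ∃ h : Q ⟶ X, f = h ≫ q

/-- Descent data with respect to equivalence relations `ρ` and `σ` : `ρ° ; α ; σ ≤ α`. -/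
def Des (D : RelDoctrine C P) {X Y : C} (ρ : P X X) (σ : P Y Y) (α : P X Y) : Prop :=
  D.comp (D.comp (D.conv ρ) α) σ ≤ α

/-- The rule of unique choice: every functional total relation contains the graph of an arrow. -/
def RUC (D : RelDoctrine C P) : Prop :=
  ∀ (X Y : C) (α : P X Y), D.Functional α → D.Total α → ∃ f : X ⟶ Y, D.gr f ≤ α

end RelDoctrine

variable {C : Type u} [Category.{v} C] {P : C → C → Type w} [∀ X Y : C, PartialOrder (P X Y)]

/-! The kernel of `f` is an equivalence relation, so it has an effective descent quotient arrow
`q`, through which `f` factors as `q ≫ i`. Since `gr q` is surjective (descent), `gr i ; (gr i)°`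
lies below its conjugate by `gr q`, which is contained in the kernel of `f`, i.e. of `q`
(effectiveness); functionality of `gr q` then collapses this to the identity. -/

namespace RelDoctrine

variable (D : RelDoctrine C P)

theorem conv_gr {X Y : C} (f : X ⟶ Y) : D.conv (D.gr f) = D.reidx (𝟙 Y) f (D.d Y) := by
  have hle : ∀ {A A' B : C} (g : A ⟶ B) (h : A' ⟶ B),
      D.conv (D.reidx g h (D.d B)) ≤ D.reidx h g (D.d B) := fun g h => by
    simpa only [D.conv_d] using D.conv_reidx_le g h (D.d _)
  refine le_antisymm (hle f (𝟙 Y)) ?_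
  simpa only [D.conv_conv, gr] using D.conv_mono (hle (𝟙 Y) f)

theorem reidx_le_gr_comp {X Y Z : C} (f : X ⟶ Y) (α : P Y Z) :
    D.reidx f (𝟙 Z) α ≤ D.comp (D.gr f) α := by
  have hd : D.d X ≤ D.reidx (𝟙 X) f (D.gr f) := by
    simpa only [gr, ← D.reidx_comp, Category.id_comp, Category.comp_id] using D.d_le_reidx f
  calc D.reidx f (𝟙 Z) α = D.comp (D.d X) (D.reidx f (𝟙 Z) α) := (D.d_comp _).symm
    _ ≤ D.comp (D.reidx (𝟙 X) f (D.gr f)) (D.reidx f (𝟙 Z) α) := D.comp_mono hd le_rfl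
    _ ≤ D.reidx (𝟙 X) (𝟙 Z) (D.comp (D.gr f) α) := D.comp_reidx_le _ _ _ _ _
    _ = D.comp (D.gr f) α := D.reidx_id _

theorem functional_gr {X Y : C} (f : X ⟶ Y) : D.Functional (D.gr f) :=
  calc D.comp (D.conv (D.gr f)) (D.gr f)
      = D.comp (D.reidx (𝟙 Y) f (D.d Y)) (D.reidx f (𝟙 Y) (D.d Y)) := by rw [conv_gr]; rfl
    _ ≤ D.reidx (𝟙 Y) (𝟙 Y) (D.comp (D.d Y) (D.d Y)) := D.comp_reidx_le _ _ _ _ _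
    _ = D.d Y := by rw [D.d_comp, D.reidx_id]

theorem total_gr {X Y : C} (f : X ⟶ Y) : D.Total (D.gr f) :=
  calc D.d X ≤ D.reidx f f (D.d Y) := D.d_le_reidx f
    _ = D.reidx f (𝟙 X) (D.reidx (𝟙 Y) f (D.d Y)) := by
      rw [← D.reidx_comp, Category.comp_id, Category.id_comp]
    _ ≤ D.comp (D.gr f) (D.conv (D.gr f)) := by rw [conv_gr]; exact D.reidx_le_gr_comp f _

theorem gr_comp_gr_le {X Y Z : C} (f : X ⟶ Y) (g : Y ⟶ Z) :
    D.comp (D.gr f) (D.gr g) ≤ D.gr (f ≫ g) :=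
  calc D.comp (D.gr f) (D.gr g) = D.comp (D.gr f) (D.reidx (𝟙 Y) (𝟙 Z) (D.gr g)) := by
        rw [D.reidx_id]
    _ ≤ D.reidx f (𝟙 Z) (D.comp (D.d Y) (D.gr g)) := D.comp_reidx_le _ _ _ _ _
    _ = D.gr (f ≫ g) := by rw [D.d_comp, gr, gr, ← D.reidx_comp, Category.comp_id]

theorem isEquivRel_of_functional_of_total {X Y : C} {α : P X Y} (hfun : D.Functional α)
    (htot : D.Total α) : D.IsEquivRel (D.comp α (D.conv α)) := by
  refine ⟨htot, by rw [D.conv_comp, D.conv_conv], ?_⟩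
  calc D.comp (D.comp α (D.conv α)) (D.comp α (D.conv α))
      = D.comp α (D.comp (D.comp (D.conv α) α) (D.conv α)) := by simp only [D.comp_assoc]
    _ ≤ D.comp α (D.comp (D.d Y) (D.conv α)) := D.comp_mono le_rfl (D.comp_mono hfun le_rfl)
    _ = D.comp α (D.conv α) := by rw [D.d_comp]

theorem isEquivRel_kernelOf {X Y : C} (f : X ⟶ Y) : D.IsEquivRel (D.kernelOf f) :=
  D.isEquivRel_of_functional_of_total (D.functional_gr f) (D.total_gr f)

theorem injectiveRel_of_kernel_comp_le {X W Y : C} {α : P X W} {β : P W Y}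
    (hfun : D.Functional α) (hsurj : D.SurjectiveRel α)
    (hker : D.comp (D.comp α β) (D.conv (D.comp α β)) ≤ D.comp α (D.conv α)) :
    D.InjectiveRel β :=
  calc D.comp β (D.conv β)
      = D.comp (D.comp (D.d W) (D.comp β (D.conv β))) (D.d W) := by rw [D.d_comp, D.comp_d]
    _ ≤ D.comp (D.comp (D.comp (D.conv α) α) (D.comp β (D.conv β))) (D.comp (D.conv α) α) :=
        D.comp_mono (D.comp_mono hsurj le_rfl) hsurj
    _ = D.comp (D.comp (D.conv α) (D.comp (D.comp α β) (D.conv (D.comp α β)))) α := by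
        simp only [D.conv_comp, D.comp_assoc]
    _ ≤ D.comp (D.comp (D.conv α) (D.comp α (D.conv α))) α :=
        D.comp_mono (D.comp_mono le_rfl hker) le_rfl
    _ = D.comp (D.comp (D.conv α) α) (D.comp (D.conv α) α) := by simp only [D.comp_assoc]
    _ ≤ D.comp (D.d W) (D.d W) := D.comp_mono hfun hfun
    _ = D.d W := D.d_comp _

end RelDoctrine

/-- Every arrow factors as a quotient arrow of its kernel followed by an injective arrow. -/
theorem statement4 (D : RelDoctrine C P) (hquot : D.HasQuotients) {X Y : C} (f : X ⟶ Y) :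
    ∃ (W : C) (q : X ⟶ W) (i : W ⟶ Y),
      f = q ≫ i ∧ D.IsQuotientArrow (D.kernelOf f) q ∧ D.Effective (D.kernelOf f) q ∧
        D.Descent q ∧ D.InjectiveRel (D.gr i) := by
  obtain ⟨W, q, hq, heff, hdesc⟩ := hquot X (D.kernelOf f) (D.isEquivRel_kernelOf f)
  obtain ⟨i, rfl, -⟩ := hq.2 Y f le_rfl
  refine ⟨W, q, i, rfl, hq, heff, hdesc,
    D.injectiveRel_of_kernel_comp_le (D.functional_gr q) hdesc ?_⟩
  have hgr := D.gr_comp_gr_le q i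
  calc _ ≤ D.kernelOf (q ≫ i) := D.comp_mono hgr (D.conv_mono hgr)
    _ = D.kernelOf q := heff
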